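/- Suppose R is F-pure and F-finite, and let 𝔞 be an ideal of R. Then the following statements are equivalent: (i) 𝔞 is uniformly F-compatible; (ii) 𝔞 is Φ(E)-special; (iii) 𝔞 is fully Φ(E)-special. -/

import Mathlib

open TensorProduct IsLocalRing DirectSum

universe u v

/-! ### Frobenius twists and base change -/

/-- `R` viewed as an algebra over itself via the `n`-th power of the Frobenius
endomorphism; this plays the role of `R^{(n)}` (an `R`-module via `r • s = r ^ p ^ n * s`). -/
def FrobAlg (R : Type u) (p n : ℕ) [CommRing R] [Fact p.Prime] [CharP R p] : Type u := R

namespace FrobAlg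

variable (R : Type u) (p n : ℕ) [CommRing R] [Fact p.Prime] [CharP R p]

instance : CommRing (FrobAlg R p n) := inferInstanceAs (CommRing R)

instance : Algebra R (FrobAlg R p n) :=
  RingHom.toAlgebra (show R →+* FrobAlg R p n from (frobenius R p) ^ n)

/-- The canonical identification of `R` with the underlying set of `R^{(n)}`. -/
def of (r : R) : FrobAlg R p n := r

end FrobAlg

/-- The Frobenius base change `R^{(n)} ⊗_R M` of an `R`-module `M` along the `n`-th
power of the Frobenius endomorphism of `R`. -/
def FrobBC (R : Type u) (p n : ℕ) [CommRing R] [Fact p.Prime] [CharP R p]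
    (M : Type v) [AddCommGroup M] [Module R M] : Type (max u v) :=
  FrobAlg R p n ⊗[R] M

namespace FrobBC

variable (R : Type u) (p n : ℕ) [CommRing R] [Fact p.Prime] [CharP R p]
  (M : Type v) [AddCommGroup M] [Module R M]

noncomputable instance : AddCommGroup (FrobBC R p n M) :=
  inferInstanceAs (AddCommGroup (FrobAlg R p n ⊗[R] M))

/-- The `R`-module structure on `R^{(n)} ⊗_R M` given by multiplication on the first
factor. -/
noncomputable instance : Module R (FrobBC R p n M) :=
  inferInstanceAs (Module (FrobAlg R p n) (FrobAlg R p n ⊗[R] M))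

variable {M}

/-- The elementary tensor `r ⊗ m` in `R^{(n)} ⊗_R M`. -/
noncomputable def tmul (r : R) (m : M) : FrobBC R p n M := FrobAlg.of R p n r ⊗ₜ[R] m

end FrobBC

/-- `R` is `F`-pure if for every `R`-module `M` the natural map
`M → R^{(1)} ⊗_R M`, `m ↦ 1 ⊗ m`, is injective. -/
def IsFPure (R : Type u) (p : ℕ) [CommRing R] [Fact p.Prime] [CharP R p] : Prop :=
  ∀ (M : Type u) [AddCommGroup M] [Module R M],
    Function.Injective fun m : M => FrobBC.tmul R p 1 (1 : R) m

/-- An ideal `𝔞` of `R` is fully `Φ(E)`-special if for every `n ≥ 1`, every `r ∈ 𝔞` and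
every `e ∈ (0 :_E 𝔞)`, the element `r ⊗ e` is zero in `R^{(n)} ⊗_R E`. -/
def IsFullyPhiSpecial (R : Type u) (p : ℕ) [CommRing R] [Fact p.Prime] [CharP R p]
    (E : Type v) [AddCommGroup E] [Module R E] (𝔞 : Ideal R) : Prop :=
  ∀ n : ℕ, 1 ≤ n → ∀ r ∈ 𝔞, ∀ e : E, (∀ a ∈ 𝔞, a • e = 0) → FrobBC.tmul R p n r e = 0

/-! ### The module `Φ(E)` and the Frobenius shift -/

/-- The Frobenius `a ↦ a ^ p`, as an `R`-algebra map `R^{(n)} → R^{(n+1)}`. -/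
def frobStepAlg (R : Type u) (p n : ℕ) [CommRing R] [Fact p.Prime] [CharP R p] :
    FrobAlg R p n →ₐ[R] FrobAlg R p (n + 1) :=
  { (show FrobAlg R p n →+* FrobAlg R p (n + 1) from frobenius R p) with
    commutes' := fun r => by
      show frobenius R p (((frobenius R p) ^ n) r) = ((frobenius R p) ^ (n + 1)) r
      rw [pow_succ']
      rfl }

/-- The Frobenius `a ↦ a ^ p`, as an `R`-linear map `R^{(n)} → R^{(n+1)}`. -/
def frobStep (R : Type u) (p n : ℕ) [CommRing R] [Fact p.Prime] [CharP R p] :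
    FrobAlg R p n →ₗ[R] FrobAlg R p (n + 1) :=
  (frobStepAlg R p n).toLinearMap

/-- The graded module `Φ(E) = ⊕_{n ≥ 0} R^{(n)} ⊗_R E`. -/
def PhiModule (R : Type u) (p : ℕ) [CommRing R] [Fact p.Prime] [CharP R p]
    (E : Type v) [AddCommGroup E] [Module R E] : Type (max u v) :=
  ⨁ n : ℕ, FrobBC R p n E

namespace PhiModule

variable (R : Type u) (p : ℕ) [CommRing R] [Fact p.Prime] [CharP R p]
  (E : Type v) [AddCommGroup E] [Module R E]

noncomputable instance : AddCommGroup (PhiModule R p E) :=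
  inferInstanceAs (AddCommGroup (⨁ n : ℕ, FrobBC R p n E))

noncomputable instance : Module R (PhiModule R p E) :=
  inferInstanceAs (Module R (⨁ n : ℕ, FrobBC R p n E))

/-- The inclusion of the `n`-th component into `Φ(E)`. -/
noncomputable def of (n : ℕ) (g : FrobBC R p n E) : PhiModule R p E :=
  DirectSum.of (fun m : ℕ => FrobBC R p m E) n g

/-- The Frobenius-semilinear shift operator `x` on `Φ(E)`, sending an element
`r ⊗ e` of the `n`-th component to `r ^ p ⊗ e` in the `(n+1)`-th component. -/
noncomputable def shift : PhiModule R p E →+ PhiModule R p E :=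
  DirectSum.toAddMonoid fun n =>
    (DirectSum.of (fun m : ℕ => FrobBC R p m E) (n + 1)).comp
      (TensorProduct.map (frobStep R p n) (LinearMap.id (R := R) (M := E))).toAddMonoidHom

end PhiModule

/-- An ideal `𝔞` of `R` is `Φ(E)`-special if it is the annihilator of an
`R[x,f]`-submodule of `Φ(E)`, i.e. of an `R`-submodule stable under the shift operator. -/
def IsPhiSpecial (R : Type u) (p : ℕ) [CommRing R] [Fact p.Prime] [CharP R p]
    (E : Type v) [AddCommGroup E] [Module R E] (𝔞 : Ideal R) : Prop :=
  ∃ N : Submodule R (PhiModule R p E),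
    (∀ g ∈ N, PhiModule.shift R p E g ∈ N) ∧ 𝔞 = N.annihilator

/-! ### Further notions -/

/-- The `q`-th bracket (Frobenius) power `I^{[q]}` of an ideal: the ideal generated by
the `q`-th powers of the elements of `I`. -/
def Ideal.bracketPow {S : Type u} [CommRing S] (I : Ideal S) (q : ℕ) : Ideal S :=
  Ideal.span ((fun x => x ^ q) '' (I : Set S))

/-- A Noetherian local ring is regular if its maximal ideal can be generated by
`dim S` elements. -/
def IsRegularLocal (S : Type u) [CommRing S] [IsLocalRing S] : Prop :=
  ∃ s : Finset S, (s.card : WithBot (WithTop ℕ)) = ringKrullDim S ∧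
    Ideal.span (s : Set S) = maximalIdeal S

/-- An ideal `𝔟` of `R` is uniformly `F`-compatible if for every `n ≥ 1` and every
`R`-linear map `φ : R^{(n)} → R` one has `φ(𝔟) ⊆ 𝔟`. -/
def UniformlyFCompatible (R : Type u) (p : ℕ) [CommRing R] [Fact p.Prime] [CharP R p]
    (𝔟 : Ideal R) : Prop :=
  ∀ n : ℕ, 1 ≤ n → ∀ φ : FrobAlg R p n →ₗ[R] R, ∀ b ∈ 𝔟, φ (FrobAlg.of R p n b) ∈ 𝔟

/-- `R` is `F`-finite if `R^{(1)}` is a finitely generated `R`-module. -/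
def IsFFinite (R : Type u) (p : ℕ) [CommRing R] [Fact p.Prime] [CharP R p] : Prop :=
  Module.Finite R (FrobAlg R p 1)

/-- A Noetherian local ring `T` of characteristic `p` is strongly `F`-regular in the
sense of Lyubeznik and Smith if the tight closure of `0` in the injective envelope of
the residue field of `T` is zero. -/
def IsStronglyFRegularLS (T : Type u) (p : ℕ) [CommRing T] [IsLocalRing T]
    [Fact p.Prime] [CharP T p] : Prop :=
  ∀ (ET : Type u) [AddCommGroup ET] [Module T ET],
    Module.Injective T ET →
    ∀ ι : (T ⧸ maximalIdeal T) →ₗ[T] ET, Function.Injective ι →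
    (∀ N : Submodule T ET, N ⊓ LinearMap.range ι = ⊥ → N = ⊥) →
    ∀ m : ET,
      (∃ c : T, (∀ P ∈ minimalPrimes T, c ∉ P) ∧
        ∃ N₀ : ℕ, ∀ n : ℕ, N₀ ≤ n → FrobBC.tmul T p n c m = 0) → m = 0

/-- `Q` is a minimal primary decomposition of the ideal `𝔄`: the `Q i` are primary,
`𝔄` is their intersection, their radicals are pairwise distinct, and none of them
contains the intersection of the others. -/
def IsMinimalPrimaryDecomposition {S : Type u} [CommRing S] (𝔄 : Ideal S) {t : ℕ}
    (Q : Fin t → Ideal S) : Prop :=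
  𝔄 = ⨅ i, Q i ∧ (∀ i, (Q i).IsPrimary) ∧
    (Function.Injective fun i => (Q i).radical) ∧
    ∀ i, ¬ (⨅ j, ⨅ (_ : j ≠ i), Q j) ≤ Q i

/-!
Everything is read off from the contractions `r ⊗ e ↦ φ(r) e` of `R^{(n)} ⊗ E` against the
functionals `φ : R^{(n)} → R`. Since `E` is an injective module containing the residue field,
`c ∈ 𝔞` as soon as `c` kills `(0 :_E 𝔞)`; hence (iii) ⇒ (i), as `φ(r) e` is the contraction of
`r ⊗ e = 0`. Since `R^{(n)}` is finite over the Noetherian ring `R` and `E` is injective,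
`R^{(n)} ⊗ E ≅ Hom(Hom(R^{(n)}, R), E)`, so an element of `R^{(n)} ⊗ E` vanishes once all its
contractions do; this gives (i) ⇒ (iii). For (iii) ⇒ (ii), `𝔞` is the annihilator of the
`R[x,f]`-submodule of `Φ(E)` spanned by the `r ⊗ e` with `e ∈ (0 :_E 𝔞)`. For (ii) ⇒ (i), if `b`
kills an `R[x,f]`-submodule `N` and `g ∈ N`, then `b xⁿ g = 0`, and applying `φ` in every degree
(as a map `R^{(m+n)} → R^{(m)}`) turns the components of `b xⁿ g` into those of `φ(b) g`.
-/

namespace Module.Injective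

variable {R : Type u} [CommRing R] {E : Type v} [AddCommGroup E] [Module R E] [Small.{v} R]
  [Module.Injective R E]

theorem exists_comp_eq_of_ker_le {P Q : Type*} [AddCommGroup P] [Module R P] [AddCommGroup Q]
    [Module R Q] (f : P →ₗ[R] Q) (σ : P →ₗ[R] E) (h : LinearMap.ker f ≤ LinearMap.ker σ) :
    ∃ θ : Q →ₗ[R] E, θ ∘ₗ f = σ := by
  obtain ⟨θ, hθ⟩ := Module.Injective.extension_property R E _ _ ((LinearMap.ker f).liftQ f le_rfl)
    (LinearMap.ker_eq_bot.mp (Submodule.ker_liftQ_eq_bot _ _ _ le_rfl))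
    ((LinearMap.ker f).liftQ σ h)
  exact ⟨θ, LinearMap.ext fun x => LinearMap.congr_fun hθ (Submodule.Quotient.mk x)⟩

theorem mem_of_forall_smul_eq_zero [IsLocalRing R] (ι : (R ⧸ maximalIdeal R) →ₗ[R] E)
    (hι : Function.Injective ι) {𝔞 : Ideal R} {c : R}
    (hc : ∀ e : E, (∀ a ∈ 𝔞, a • e = 0) → c • e = 0) : c ∈ 𝔞 := by
  by_contra hc𝔞
  let T := LinearMap.toSpanSingleton R (R ⧸ 𝔞) (𝔞.mkQ c)
  -- `ker T = (𝔞 : c) ⊆ 𝔪`, so `c̄ ↦ ι 1` extends to a map `R ⧸ 𝔞 → E`.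
  have hT : LinearMap.ker T ≤ LinearMap.ker (ι ∘ₗ (maximalIdeal R).mkQ) := by
    intro s hs
    have hsc : s * c ∈ 𝔞 := by
      simpa [T, Algebra.smul_def, ← map_mul, Ideal.Quotient.eq_zero_iff_mem] using hs
    have hs𝔪 : s ∈ maximalIdeal R := fun hunit => hc𝔞 <| by
      simpa [← mul_assoc, hunit.unit.inv_mul] using 𝔞.mul_mem_left ↑hunit.unit⁻¹ hsc
    simp [Ideal.Quotient.eq_zero_iff_mem.mpr hs𝔪]
  obtain ⟨θ, hθ⟩ := exists_comp_eq_of_ker_le T _ hT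
  refine absurd (hc (θ (𝔞.mkQ 1)) fun a ha => ?_) ?_
  · rw [← map_smul, ← map_smul, smul_eq_mul, mul_one, Submodule.mkQ_apply,
      (Submodule.Quotient.mk_eq_zero _).mpr ha, map_zero]
  · have hθc := LinearMap.congr_fun hθ 1
    rw [← map_smul, ← map_smul, smul_eq_mul, mul_one]
    simp only [LinearMap.comp_apply, T, LinearMap.toSpanSingleton_apply_one] at hθc
    rw [hθc, ← map_zero ι, hι.eq_iff, Submodule.mkQ_apply, Submodule.Quotient.mk_eq_zero]
    exact fun h => (maximalIdeal.isMaximal R).ne_top ((Ideal.eq_top_iff_one _).mpr h)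

end Module.Injective

namespace TensorProduct

open Module

variable {R : Type u} [CommRing R] {E : Type v} [AddCommGroup E] [Module R E]

noncomputable def equivHomDual (F : Type*) [AddCommGroup F] [Module R F] [Module.Finite R F]
    [Projective R F] : F ⊗[R] E ≃ₗ[R] (Dual R F →ₗ[R] E) :=
  (TensorProduct.congr (evalEquiv R F) (LinearEquiv.refl R E)).trans
    (dualTensorHomEquiv R (Dual R F) E)

theorem equivHomDual_apply {F : Type*} [AddCommGroup F] [Module R F] [Module.Finite R F]
    [Projective R F] (y : F ⊗[R] E) (c : Dual R F) :
    equivHomDual F y c = TensorProduct.lid R E (c.rTensor E y) := by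
  induction y using TensorProduct.induction_on with
  | zero => simp
  | tmul x e => simp [equivHomDual]
  | add y y' hy hy' => simp [hy, hy']

variable [Small.{v} R] [Module.Injective R E]

theorem mem_range_rTensor_of_forall_dual {F G : Type*} [AddCommGroup F] [Module R F]
    [Module.Finite R F] [Projective R F] [AddCommGroup G] [Module R G] [Module.Finite R G]
    [Projective R G] (u : G →ₗ[R] F) (y : F ⊗[R] E)
    (hy : ∀ c : Dual R F, c ∘ₗ u = 0 → TensorProduct.lid R E (c.rTensor E y) = 0) :
    y ∈ LinearMap.range (u.rTensor E) := by
  have hker : LinearMap.ker u.dualMap ≤ LinearMap.ker (equivHomDual F y) := fun c hc => by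
    rw [LinearMap.mem_ker, equivHomDual_apply]
    exact hy c hc
  obtain ⟨θ, hθ⟩ := Module.Injective.exists_comp_eq_of_ker_le _ _ hker
  refine ⟨(equivHomDual G).symm θ, (equivHomDual F).injective (LinearMap.ext fun c => ?_)⟩
  rw [← LinearMap.congr_fun hθ c, equivHomDual_apply, ← LinearMap.comp_apply,
    ← LinearMap.rTensor_comp, ← equivHomDual_apply, LinearEquiv.apply_symm_apply]
  rfl

theorem eq_zero_of_forall_dual [IsNoetherianRing R] {M : Type*} [AddCommGroup M] [Module R M]
    [Module.Finite R M] (z : M ⊗[R] E)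
    (hz : ∀ φ : Dual R M, TensorProduct.lid R E (φ.rTensor E z) = 0) : z = 0 := by
  obtain ⟨b, v, hv⟩ := Module.Finite.exists_fin' R M
  obtain ⟨a, w, hw⟩ := Module.Finite.exists_fin' R (LinearMap.ker v)
  let u := (LinearMap.ker v).subtype ∘ₗ w
  have hexact : Function.Exact u v := by
    rw [LinearMap.exact_iff, LinearMap.range_comp_of_range_eq_top _ (LinearMap.range_eq_top.mpr hw),
      Submodule.range_subtype]
  obtain ⟨y, rfl⟩ := LinearMap.rTensor_surjective E hv z
  obtain ⟨x, rfl⟩ : y ∈ LinearMap.range (u.rTensor E) := by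
    refine mem_range_rTensor_of_forall_dual u y fun c hc => ?_
    have hcv : LinearMap.ker v ≤ LinearMap.ker c := by
      rw [hexact.linearMap_ker_eq]
      rintro _ ⟨x, rfl⟩
      exact LinearMap.congr_fun hc x
    have hfac : ((LinearMap.ker v).liftQ c hcv ∘ₗ
        (v.quotKerEquivOfSurjective hv).symm.toLinearMap) ∘ₗ v = c := by
      ext x
      simp
    rw [← hfac, LinearMap.rTensor_comp, LinearMap.comp_apply]
    exact hz _
  exact (rTensor_exact E hexact hv).apply_apply_eq_zero x

end TensorProduct

theorem RingHom.Finite.pow {A : Type*} [CommRing A] {f : A →+* A} (hf : f.Finite) :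
    ∀ n : ℕ, (f ^ n).Finite
  | 0 => RingHom.Finite.id A
  | n + 1 => pow_succ f n ▸ (RingHom.Finite.pow hf n).comp hf

namespace FrobAlg

variable {R : Type u} [CommRing R] {p : ℕ} [Fact p.Prime] [CharP R p]

theorem finite (hFF : IsFFinite R p) (n : ℕ) : Module.Finite R (FrobAlg R p n) :=
  RingHom.Finite.pow (f := frobenius R p) (pow_one (frobenius R p) ▸ hFF) n

theorem smul_def {n : ℕ} (c : R) (s : FrobAlg R p n) : c • s = of R p n (c ^ p ^ n) * s := by
  show of R p n ((frobenius R p ^ n) c) * s = _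
  rw [← iterateFrobenius_eq_pow]
  rfl

theorem frobStep_apply {n : ℕ} (s : FrobAlg R p n) : frobStep R p n s = of R p (n + 1) (s ^ p) :=
  frobenius_def (R := R) p s

theorem frobStep_comp_mulLeft {n : ℕ} (c : R) :
    frobStep R p n ∘ₗ LinearMap.mulLeft R (of R p n c) =
      LinearMap.mulLeft R (of R p (n + 1) (c ^ p)) ∘ₗ frobStep R p n := by
  ext s
  rw [LinearMap.comp_apply, LinearMap.comp_apply, frobStep_apply, frobStep_apply,
    LinearMap.mulLeft_apply, LinearMap.mulLeft_apply, mul_pow]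
  rfl

def frobPow (m : ℕ) : (k : ℕ) → FrobAlg R p m →ₗ[R] FrobAlg R p (m + k)
  | 0 => LinearMap.id
  | k + 1 => frobStep R p (m + k) ∘ₗ frobPow m k

theorem frobPow_apply (m k : ℕ) (s : FrobAlg R p m) :
    frobPow m k s = of R p (m + k) (s ^ p ^ k) := by
  induction k with
  | zero => rw [pow_zero, pow_one]; rfl
  | succ k ih =>
    rw [frobPow, LinearMap.comp_apply, ih, frobStep_apply, pow_succ, pow_mul]
    rfl

/-- `R`-linear because `R^{(m+n)}` is `R^{(n)}` restricted along `f^m`. -/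
def twist {n : ℕ} (φ : FrobAlg R p n →ₗ[R] R) (m : ℕ) :
    FrobAlg R p (m + n) →ₗ[R] FrobAlg R p m where
  toFun s := of R p m (φ (of R p n s))
  map_add' s s' := φ.map_add s s'
  map_smul' c s := by
    have : of R p n (c • s) = (c ^ p ^ m) • of R p n s := by
      rw [smul_def, smul_def, ← pow_mul, ← pow_add]
      rfl
    simp only [this, map_smul, RingHom.id_apply, smul_def (n := m)]
    rfl

theorem twist_apply {n : ℕ} (φ : FrobAlg R p n →ₗ[R] R) (m : ℕ) (s : FrobAlg R p (m + n)) :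
    twist φ m s = of R p m (φ (of R p n s)) := rfl

theorem twist_comp_mulLeft_comp_frobPow {n : ℕ} (φ : FrobAlg R p n →ₗ[R] R) (m : ℕ) (b : R) :
    twist φ m ∘ₗ LinearMap.mulLeft R (of R p (m + n) b) ∘ₗ frobPow m n =
      LinearMap.mulLeft R (of R p m (φ (of R p n b))) := by
  ext s
  have hs : of R p n (of R p (m + n) b * frobPow m n s) = (show R from s) • of R p n b := by
    rw [frobPow_apply, smul_def, mul_comm]
    rfl
  rw [LinearMap.comp_apply, LinearMap.comp_apply, LinearMap.mulLeft_apply, twist_apply, hs,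
    map_smul, LinearMap.mulLeft_apply, smul_eq_mul, mul_comm]
  rfl

def degreeZeroToSelf : FrobAlg R p 0 →ₗ[R] R where
  toFun s := s
  map_add' _ _ := rfl
  map_smul' c s := by
    rw [smul_def, pow_zero, pow_one]
    rfl

end FrobAlg

namespace FrobBC

variable {R : Type u} [CommRing R] {p : ℕ} [Fact p.Prime] [CharP R p]
  {M : Type v} [AddCommGroup M] [Module R M] {n : ℕ}

theorem smul_tmul' (c r : R) (m : M) : c • tmul R p n r m = tmul R p n (c * r) m :=
  TensorProduct.smul_tmul' (FrobAlg.of R p n c) (FrobAlg.of R p n r) m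

theorem tmul_smul (a r : R) (m : M) : tmul R p n r (a • m) = tmul R p n (a ^ p ^ n * r) m := by
  rw [tmul, ← TensorProduct.smul_tmul, FrobAlg.smul_def]
  rfl

/-- Only additive: the `R`-module structure of `FrobBC` is through the first factor. -/
noncomputable def map {k : ℕ} (f : FrobAlg R p n →ₗ[R] FrobAlg R p k) :
    FrobBC R p n M →+ FrobBC R p k M :=
  (f.rTensor M).toAddMonoidHom

theorem map_tmul {k : ℕ} (f : FrobAlg R p n →ₗ[R] FrobAlg R p k) (r : R) (m : M) :
    map f (tmul R p n r m) = tmul R p k (f (FrobAlg.of R p n r)) m :=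
  rfl

theorem map_comp {k l : ℕ} (g : FrobAlg R p k →ₗ[R] FrobAlg R p l)
    (f : FrobAlg R p n →ₗ[R] FrobAlg R p k) (t : FrobBC R p n M) :
    map (g ∘ₗ f) t = map g (map f t) :=
  LinearMap.rTensor_comp_apply M g f t

theorem smul_eq_map (c : R) (t : FrobBC R p n M) :
    c • t = map (LinearMap.mulLeft R (FrobAlg.of R p n c)) t :=
  rfl

noncomputable def contract (φ : FrobAlg R p n →ₗ[R] R) : FrobBC R p n M →+ M :=
  ((TensorProduct.lid R M).toLinearMap ∘ₗ φ.rTensor M).toAddMonoidHom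

theorem contract_tmul (φ : FrobAlg R p n →ₗ[R] R) (r : R) (m : M) :
    contract φ (tmul R p n r m) = φ (FrobAlg.of R p n r) • m :=
  TensorProduct.lid_tmul _ _

theorem tmul_zero_eq_zero_iff {r : R} {m : M} : tmul R p 0 r m = 0 ↔ r • m = 0 := by
  constructor
  · intro h
    have := congrArg (contract FrobAlg.degreeZeroToSelf) h
    rwa [contract_tmul, map_zero] at this
  · intro h
    calc tmul R p 0 r m = tmul R p 0 1 (r • m) := by rw [tmul_smul, pow_zero, pow_one, mul_one]
      _ = 0 := by rw [h]; exact TensorProduct.tmul_zero _ _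

end FrobBC

namespace PhiModule

variable {R : Type u} [CommRing R] {p : ℕ} [Fact p.Prime] [CharP R p]
  {E : Type v} [AddCommGroup E] [Module R E]

noncomputable def component (k : ℕ) : PhiModule R p E →ₗ[R] FrobBC R p k E :=
  DirectSum.component R ℕ (fun n => FrobBC R p n E) k

theorem ext_component {g g' : PhiModule R p E} (h : ∀ k, component k g = component k g') :
    g = g' :=
  DirectSum.ext_component R h

theorem component_of_self (n : ℕ) (t : FrobBC R p n E) : component n (of R p E n t) = t :=
  DirectSum.of_eq_same (β := fun m => FrobBC R p m E) n t

theorem component_of_of_ne {n k : ℕ} (h : n ≠ k) (t : FrobBC R p n E) :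
    component k (of R p E n t) = 0 :=
  DirectSum.of_eq_of_ne (β := fun m => FrobBC R p m E) n k t h.symm

theorem of_smul (n : ℕ) (c : R) (t : FrobBC R p n E) : of R p E n (c • t) = c • of R p E n t :=
  (DirectSum.lof R ℕ (fun m => FrobBC R p m E) n).map_smul c t

theorem of_eq_zero_iff {n : ℕ} {t : FrobBC R p n E} : of R p E n t = 0 ↔ t = 0 :=
  (DirectSum.of_injective (β := fun m => FrobBC R p m E) n).eq_iff' (map_zero _)

@[elab_as_elim]
theorem induction_on {motive : PhiModule R p E → Prop} (g : PhiModule R p E) (zero : motive 0)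
    (of : ∀ n t, motive (of R p E n t)) (add : ∀ g g', motive g → motive g' → motive (g + g')) :
    motive g :=
  DirectSum.induction_on g zero of add

theorem shift_of (n : ℕ) (t : FrobBC R p n E) :
    shift R p E (of R p E n t) = of R p E (n + 1) (FrobBC.map (frobStep R p n) t) :=
  DirectSum.toAddMonoid_of (β := fun m => FrobBC R p m E) _ n t

theorem component_shift (g : PhiModule R p E) (k : ℕ) :
    component (k + 1) (shift R p E g) = FrobBC.map (frobStep R p k) (component k g) := by
  induction g using PhiModule.induction_on with
  | zero => rw [map_zero, map_zero, map_zero, map_zero]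
  | of n t =>
    rw [shift_of]
    rcases eq_or_ne n k with rfl | hnk
    · rw [component_of_self, component_of_self]
    · rw [component_of_of_ne (by omega), component_of_of_ne hnk, map_zero]
  | add g g' hg hg' => rw [map_add, map_add, hg, hg', map_add, map_add]

theorem component_shift_iterate (g : PhiModule R p E) (m k : ℕ) :
    component (m + k) ((shift R p E)^[k] g) = FrobBC.map (FrobAlg.frobPow m k) (component m g) := by
  induction k with
  | zero => exact (LinearMap.rTensor_id_apply E _ _).symm
  | succ k ih =>
    rw [Function.iterate_succ_apply']
    exact (component_shift _ (m + k)).trans (ih ▸ (FrobBC.map_comp _ _ _).symm)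

theorem shift_smul (c : R) (g : PhiModule R p E) :
    shift R p E (c • g) = c ^ p • shift R p E g := by
  induction g using PhiModule.induction_on with
  | zero => rw [smul_zero, map_zero, smul_zero]
  | of n t =>
    rw [← of_smul, shift_of, shift_of, ← of_smul, FrobBC.smul_eq_map, FrobBC.smul_eq_map,
      ← FrobBC.map_comp, ← FrobBC.map_comp, FrobAlg.frobStep_comp_mulLeft]
  | add g g' hg hg' => rw [smul_add, map_add, hg, hg', map_add, smul_add]

end PhiModule

section Equivalences

variable {R : Type u} [CommRing R] {p : ℕ} [Fact p.Prime] [CharP R p] {𝔞 : Ideal R}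

theorem IsPhiSpecial.uniformlyFCompatible {E : Type v} [AddCommGroup E] [Module R E]
    (h : IsPhiSpecial R p E 𝔞) : UniformlyFCompatible R p 𝔞 := by
  obtain ⟨N, hN, rfl⟩ := h
  intro n _ φ b hb
  rw [Submodule.mem_annihilator] at hb ⊢
  intro g hg
  refine PhiModule.ext_component fun m => ?_
  have hkill := congrArg (FrobBC.map (FrobAlg.twist φ m) ∘ PhiModule.component (m + n))
    (hb _ (Set.MapsTo.iterate hN n hg))
  simp only [Function.comp_apply, map_smul, PhiModule.component_shift_iterate, FrobBC.smul_eq_map,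
    ← FrobBC.map_comp, FrobAlg.twist_comp_mulLeft_comp_frobPow, map_zero] at hkill
  rw [map_smul, map_zero, FrobBC.smul_eq_map, hkill]

variable {E : Type u} [AddCommGroup E] [Module R E] [Module.Injective R E]

theorem IsFullyPhiSpecial.uniformlyFCompatible [IsLocalRing R]
    (ι : (R ⧸ maximalIdeal R) →ₗ[R] E) (hι : Function.Injective ι)
    (h : IsFullyPhiSpecial R p E 𝔞) : UniformlyFCompatible R p 𝔞 := by
  intro n hn φ b hb
  refine Module.Injective.mem_of_forall_smul_eq_zero ι hι fun e he => ?_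
  rw [← FrobBC.contract_tmul, h n hn b hb e he, map_zero]

theorem UniformlyFCompatible.isFullyPhiSpecial [IsNoetherianRing R] (hFF : IsFFinite R p)
    (h : UniformlyFCompatible R p 𝔞) : IsFullyPhiSpecial R p E 𝔞 := by
  intro n hn r hr e he
  have := FrobAlg.finite hFF n
  exact TensorProduct.eq_zero_of_forall_dual _ fun φ => by
    simpa [FrobBC.tmul] using he _ (h n hn φ r hr)

theorem IsFullyPhiSpecial.isPhiSpecial [IsLocalRing R] (ι : (R ⧸ maximalIdeal R) →ₗ[R] E)
    (hι : Function.Injective ι) (h : IsFullyPhiSpecial R p E 𝔞) : IsPhiSpecial R p E 𝔞 := by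
  let S : Set (PhiModule R p E) := {g | ∃ n r e, (∀ a ∈ 𝔞, a • e = 0) ∧
    PhiModule.of R p E n (FrobBC.tmul R p n r e) = g}
  refine ⟨Submodule.span R S, fun g hg => ?_, le_antisymm ?_ ?_⟩
  · induction hg using Submodule.span_induction with
    | mem g hg =>
      obtain ⟨n, r, e, he, rfl⟩ := hg
      refine Submodule.subset_span ⟨n + 1, r ^ p, e, he, ?_⟩
      rw [PhiModule.shift_of, FrobBC.map_tmul, FrobAlg.frobStep_apply]
      rfl
    | zero => exact (map_zero (PhiModule.shift R p E)).symm ▸ Submodule.zero_mem _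
    | add g g' _ _ hg hg' =>
      exact (map_add (PhiModule.shift R p E) g g').symm ▸ Submodule.add_mem _ hg hg'
    | smul c g _ hg => exact (PhiModule.shift_smul c g).symm ▸ Submodule.smul_mem _ _ hg
  · intro a ha
    rw [Submodule.mem_annihilator_span]
    rintro ⟨_, n, r, e, he, rfl⟩
    rw [← PhiModule.of_smul, FrobBC.smul_tmul', PhiModule.of_eq_zero_iff]
    cases n with
    | zero => rw [FrobBC.tmul_zero_eq_zero_iff, mul_comm, mul_smul, he a ha, smul_zero]
    | succ k => exact h (k + 1) k.succ_pos _ (𝔞.mul_mem_right r ha) e he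
  · intro c hc
    rw [Submodule.mem_annihilator_span] at hc
    refine Module.Injective.mem_of_forall_smul_eq_zero ι hι fun e he => ?_
    have hc0 := hc ⟨_, 0, 1, e, he, rfl⟩
    rwa [← PhiModule.of_smul, PhiModule.of_eq_zero_iff, FrobBC.smul_tmul', mul_one,
      FrobBC.tmul_zero_eq_zero_iff] at hc0

end Equivalences

theorem uniformly_F_compatible_iff_special_iff_fully_special_general (R : Type u) [CommRing R] [IsNoetherianRing R] [IsLocalRing R]
    (p : ℕ) [Fact p.Prime] [CharP R p]
    (E : Type u) [AddCommGroup E] [Module R E]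
    (hE : Module.Injective R E)
    (ι : (R ⧸ maximalIdeal R) →ₗ[R] E) (hι : Function.Injective ι)
    (hFF : IsFFinite R p) (𝔞 : Ideal R) :
    (UniformlyFCompatible R p 𝔞 ↔ IsPhiSpecial R p E 𝔞) ∧
      (IsPhiSpecial R p E 𝔞 ↔ IsFullyPhiSpecial R p E 𝔞) := by
  have := hE
  have h13 : UniformlyFCompatible R p 𝔞 → IsFullyPhiSpecial R p E 𝔞 :=
    UniformlyFCompatible.isFullyPhiSpecial hFF
  have h32 : IsFullyPhiSpecial R p E 𝔞 → IsPhiSpecial R p E 𝔞 :=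
    IsFullyPhiSpecial.isPhiSpecial ι hι
  have h21 : IsPhiSpecial R p E 𝔞 → UniformlyFCompatible R p 𝔞 :=
    IsPhiSpecial.uniformlyFCompatible
  exact ⟨⟨h32 ∘ h13, h21⟩, ⟨h13 ∘ h21, h32⟩⟩

theorem uniformly_F_compatible_iff_special_iff_fully_special (R : Type u) [CommRing R] [IsNoetherianRing R] [IsLocalRing R]
    (p : ℕ) [Fact p.Prime] [CharP R p]
    (E : Type u) [AddCommGroup E] [Module R E]
    (hE : Module.Injective R E)
    (ι : (R ⧸ maximalIdeal R) →ₗ[R] E) (hι : Function.Injective ι)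
    (hess : ∀ N : Submodule R E, N ⊓ LinearMap.range ι = ⊥ → N = ⊥)
    (hFpure : IsFPure R p) (hFF : IsFFinite R p) (𝔞 : Ideal R) :
    (UniformlyFCompatible R p 𝔞 ↔ IsPhiSpecial R p E 𝔞) ∧
      (IsPhiSpecial R p E 𝔞 ↔ IsFullyPhiSpecial R p E 𝔞) :=
  uniformly_F_compatible_iff_special_iff_fully_special_general R p E hE ι hι hFF 𝔞
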